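/- Let f and g be the morphisms on {0,1,2} defined by f(0) = 02, f(1) = 101, f(2) = 10 and g(0) = 0210, g(1) = 1, g(2) = 10. Then f^∞(0) = g^∞(0). -/

import Mathlib

/-- A morphism `f : Γ → Γ⁺` applied to a finite word, by concatenation. -/
def applyW {Γ : Type*} (f : Γ → List Γ) (w : List Γ) : List Γ := w.flatMap f

/-- A morphism applied to an infinite sequence, by concatenation
(meaningful when every `f a` is nonempty: then the `n`-th letter of
`f(σ(0))f(σ(1))⋯` lies within the first `n+1` blocks). -/
def applyS {Γ : Type*} (f : Γ → List Γ) (σ : ℕ → Γ) (n : ℕ) : Γ :=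
  ((List.range (n + 1)).flatMap fun i => f (σ i)).getD n (σ 0)

/-- A coding applied letterwise to an infinite sequence. -/
def applyC {Γ S : Type*} (τ : Γ → S) (σ : ℕ → Γ) : ℕ → S := fun n => τ (σ n)

/-- The fixed point `f^∞(a)` of a morphism `f` with `f a = a·u`, `u` nonempty:
its `n`-th letter is the `n`-th letter of `f^(n+1)(a)` (which has length `> n`). -/
def fixpt {Γ : Type*} (f : Γ → List Γ) (a : Γ) (n : ℕ) : Γ :=
  ((applyW f)^[n + 1] [a]).getD n a


/-!
Write `x = f^∞(0)`. If `g` maps prefixes of `x` to prefixes of `x`, then every `g^m(0)` is a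
prefix of `x`, hence `g^∞(0) = x`. Since every prefix of `x` is a prefix of some `f^m(0)`, it suffices that
`g(f^m(0))` is a prefix of `x`. Now `g ∘ f` and `f ∘ g` agree up to a bounded shift `d` with
`d(0)` empty: `g(f(a)) d(b) = d(a) f(g(a))` for every factor `ab` of `x`. Telescoping along
`w = f^m(0)` shows that `g(f(w))` is a prefix of `f(g(w))`, which is a prefix of `x` by induction.
-/

open List

section Words

variable {Γ : Type*} (f : Γ → List Γ)

theorem applyW_cons (a : Γ) (w : List Γ) : applyW f (a :: w) = f a ++ applyW f w :=
  rfl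

theorem applyW_append (u v : List Γ) : applyW f (u ++ v) = applyW f u ++ applyW f v :=
  flatMap_append

theorem applyW_iterate_append (m : ℕ) (u v : List Γ) :
    (applyW f)^[m] (u ++ v) = (applyW f)^[m] u ++ (applyW f)^[m] v := by
  induction m generalizing u v with
  | zero => rfl
  | succ m ih => rw [Function.iterate_succ_apply, applyW_append, ih]; rfl

theorem List.IsPrefix.applyW {u v : List Γ} (h : u <+: v) : applyW f u <+: applyW f v := by
  obtain ⟨t, rfl⟩ := h
  rw [applyW_append]
  exact prefix_append _ _

variable {f}

theorem length_le_length_applyW (hf : ∀ x, f x ≠ []) (w : List Γ) :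
    w.length ≤ (applyW f w).length := by
  induction w with
  | nil => simp
  | cons a w ih =>
    have := length_pos_iff.2 (hf a)
    simp only [applyW, flatMap_cons, length_append, length_cons] at ih ⊢
    omega

theorem length_le_length_applyW_iterate (hf : ∀ x, f x ≠ []) (m : ℕ) (w : List Γ) :
    w.length ≤ ((applyW f)^[m] w).length := by
  induction m with
  | zero => rfl
  | succ m ih =>
    rw [Function.iterate_succ_apply']
    exact ih.trans (length_le_length_applyW hf _)

variable {R : Γ → Γ → Prop}

theorem List.IsChain.applyW (hne : ∀ a, f a ≠ []) (hf : ∀ a, IsChain R (f a))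
    (hR : ∀ a b, R a b → ∀ x ∈ (f a).getLast?, ∀ y ∈ (f b).head?, R x y) {w : List Γ}
    (hw : IsChain R w) : IsChain R (applyW f w) := by
  rw [_root_.applyW, flatMap_def, isChain_flatten (by simpa using fun a _ => hne a)]
  exact ⟨by simpa using fun a _ => hf a, (isChain_map f).2 (hw.imp hR)⟩

end Words

section SeqPrefix

variable {Γ : Type*} {σ : ℕ → Γ} {u v w : List Γ}

def IsSeqPrefix (w : List Γ) (σ : ℕ → Γ) : Prop :=
  ∀ i (hi : i < w.length), w[i] = σ i

theorem IsSeqPrefix.of_prefix (hv : IsSeqPrefix v σ) (h : u <+: v) : IsSeqPrefix u σ :=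
  fun i hi => (h.getElem hi).trans (hv i _)

theorem IsSeqPrefix.prefix_of_length_le (hu : IsSeqPrefix u σ) (hv : IsSeqPrefix v σ)
    (hl : u.length ≤ v.length) : u <+: v :=
  prefix_iff_getElem.2 ⟨hl, fun i hi => (hu i hi).trans (hv i _).symm⟩

theorem IsSeqPrefix.getD_eq (hw : IsSeqPrefix w σ) {n : ℕ} (hn : n < w.length) (d : Γ) :
    w.getD n d = σ n := by
  rw [getD_eq_getElem?_getD, getElem?_eq_getElem hn, Option.getD_some, hw n hn]

end SeqPrefix

section FixedPoint

variable {Γ : Type*} {f : Γ → List Γ} {a : Γ} {u : List Γ}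

theorem applyW_iterate_succ_singleton (hfa : f a = a :: u) (m : ℕ) :
    (applyW f)^[m + 1] [a] = (applyW f)^[m] [a] ++ (applyW f)^[m] u := by
  rw [Function.iterate_succ_apply, ← applyW_iterate_append]
  simp [applyW, hfa]

theorem applyW_iterate_singleton_prefix (hfa : f a = a :: u) {m m' : ℕ} (h : m ≤ m') :
    (applyW f)^[m] [a] <+: (applyW f)^[m'] [a] := by
  induction m', h using Nat.le_induction with
  | base => exact prefix_refl _
  | succ m' _ ih =>
    rw [applyW_iterate_succ_singleton hfa]
    exact ih.trans (prefix_append _ _)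

theorem lt_length_applyW_iterate_singleton (hfa : f a = a :: u) (hu : u ≠ [])
    (hf : ∀ x, f x ≠ []) (m : ℕ) : m < ((applyW f)^[m] [a]).length := by
  induction m with
  | zero => simp
  | succ m ih =>
    have := (length_pos_iff.2 hu).trans_le (length_le_length_applyW_iterate hf m u)
    rw [applyW_iterate_succ_singleton hfa, length_append]
    omega

variable (hfa : f a = a :: u) (hu : u ≠ []) (hf : ∀ x, f x ≠ [])
include hfa hu hf

theorem isSeqPrefix_applyW_iterate_fixpt (m : ℕ) :
    IsSeqPrefix ((applyW f)^[m] [a]) (fixpt f a) := by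
  intro i hi
  have hi' := lt_length_applyW_iterate_singleton hfa hu hf (i + 1)
  rw [fixpt, getD_eq_getElem?_getD, getElem?_eq_getElem (by omega), Option.getD_some]
  rcases le_total m (i + 1) with h | h
  · exact (applyW_iterate_singleton_prefix hfa h).getElem hi
  · exact ((applyW_iterate_singleton_prefix hfa h).getElem (by omega)).symm

theorem IsSeqPrefix.prefix_applyW_iterate_fixpt {w : List Γ} (hw : IsSeqPrefix w (fixpt f a)) :
    w <+: (applyW f)^[w.length] [a] :=
  hw.prefix_of_length_le (isSeqPrefix_applyW_iterate_fixpt hfa hu hf _)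
    (lt_length_applyW_iterate_singleton hfa hu hf _).le

theorem IsSeqPrefix.applyW_fixpt {w : List Γ} (hw : IsSeqPrefix w (fixpt f a)) :
    IsSeqPrefix (applyW f w) (fixpt f a) := by
  refine (isSeqPrefix_applyW_iterate_fixpt hfa hu hf (w.length + 1)).of_prefix ?_
  rw [Function.iterate_succ_apply']
  exact (hw.prefix_applyW_iterate_fixpt hfa hu hf).applyW f

theorem fixpt_eq_of_isSeqPrefix_applyW {σ : ℕ → Γ} (h0 : σ 0 = a)
    (hσ : ∀ w, IsSeqPrefix w σ → IsSeqPrefix (applyW f w) σ) : fixpt f a = σ := by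
  have hpre : ∀ m, IsSeqPrefix ((applyW f)^[m] [a]) σ := by
    intro m
    induction m with
    | zero => simp [IsSeqPrefix, h0]
    | succ m ih => rw [Function.iterate_succ_apply']; exact hσ _ ih
  funext n
  exact (hpre (n + 1)).getD_eq
    (Nat.lt_of_succ_lt (lt_length_applyW_iterate_singleton hfa hu hf (n + 1))) a

end FixedPoint

section Conjugacy

variable {Γ : Type*} {f g d : Γ → List Γ} {R : Γ → Γ → Prop}

theorem applyW_applyW_prefix_of_isChain (hpre : ∀ a, applyW g (f a) <+: d a ++ applyW f (g a))
    (hstep : ∀ a b, R a b → applyW g (f a) ++ d b = d a ++ applyW f (g a)) (a : Γ) (w : List Γ)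
    (hw : IsChain R (a :: w)) :
    applyW g (applyW f (a :: w)) <+: d a ++ applyW f (applyW g (a :: w)) := by
  induction w generalizing a with
  | nil => simpa [applyW] using hpre a
  | cons b w ih =>
    obtain ⟨hab, hw⟩ := isChain_cons_cons.1 hw
    rw [applyW_cons f a, applyW_cons g a, applyW_append, applyW_append, ← append_assoc,
      ← hstep a b hab, append_assoc, prefix_append_right_inj]
    exact ih b hw

end Conjugacy

section Example

abbrev F : Fin 3 → List (Fin 3) := ![[0, 2], [1, 0, 1], [1, 0]]
abbrev G : Fin 3 → List (Fin 3) := ![[0, 2, 1, 0], [1], [1, 0]]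

/-- The factors of length two of `F^∞(0)`. -/
abbrev Factor2 (a b : Fin 3) : Prop := (a, b) ∈ [(0, 1), (0, 2), (1, 0), (2, 1)]

abbrev D : Fin 3 → List (Fin 3) := ![[], [1, 0, 2], [1, 0, 2]]

theorem F_ne_nil : ∀ x, F x ≠ [] := by decide

theorem G_ne_nil : ∀ x, G x ≠ [] := by decide

theorem isChain_applyW_F_iterate (m : ℕ) : IsChain Factor2 ((applyW F)^[m] [0]) := by
  induction m with
  | zero => exact isChain_singleton 0
  | succ m ih =>
    rw [Function.iterate_succ_apply']
    exact ih.applyW F_ne_nil (by decide) (by decide)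

theorem isSeqPrefix_applyW_G_applyW_F_iterate (m : ℕ) :
    IsSeqPrefix (applyW G ((applyW F)^[m] [0])) (fixpt F 0) := by
  induction m with
  | zero => exact (isSeqPrefix_applyW_iterate_fixpt rfl (by simp) F_ne_nil 2).of_prefix (by decide)
  | succ m ih =>
    obtain ⟨t, ht⟩ : [0] <+: (applyW F)^[m] [0] :=
      applyW_iterate_singleton_prefix rfl (Nat.zero_le m)
    have hchain := isChain_applyW_F_iterate m
    rw [← ht] at hchain ih
    refine (ih.applyW_fixpt rfl (by simp) F_ne_nil).of_prefix ?_
    rw [Function.iterate_succ_apply', ← ht]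
    exact applyW_applyW_prefix_of_isChain (d := D) (by decide) (by decide) 0 t hchain

theorem IsSeqPrefix.applyW_G_fixpt_F {w : List (Fin 3)} (hw : IsSeqPrefix w (fixpt F 0)) :
    IsSeqPrefix (applyW G w) (fixpt F 0) :=
  (isSeqPrefix_applyW_G_applyW_F_iterate w.length).of_prefix
    ((hw.prefix_applyW_iterate_fixpt rfl (by simp) F_ne_nil).applyW G)

end Example

/-- `f^∞(0) = g^∞(0)` for `f(0)=02, f(1)=101, f(2)=10` and
`g(0)=0210, g(1)=1, g(2)=10`. -/
theorem stmt_12 :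
    fixpt (![[0, 2], [1, 0, 1], [1, 0]] : Fin 3 → List (Fin 3)) 0 =
      fixpt (![[0, 2, 1, 0], [1], [1, 0]] : Fin 3 → List (Fin 3)) 0 :=
  (fixpt_eq_of_isSeqPrefix_applyW (f := G) rfl (by simp) G_ne_nil rfl
    fun _ hw => hw.applyW_G_fixpt_F).symm
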